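/- For every n ≥ 1, in the POMDP P'_n (defined in the context) with reachability objective Reach({Goal}), every finite-memory randomized observation-based strategy that is almost-sure winning from the initial state q_0 has memory of size at least p*_n = p_1·p_2⋯p_n; in particular its memory size is at least 2^n, while P'_n has 3 + (p_1 + … + p_n) states, a number polynomial in n. -/

import Mathlib

open scoped ENNReal

/-- A partially-observable Markov decision process (POMDP) with states `L`,
actions `A` and observations `O`: a probabilistic transition function and an
observation function (the observations partition the state space). -/
structure POMDP (L : Type) (A : Type) (O : Type) where
  δ : L → A → PMF L
  obs : L → O

namespace POMDP

variable {L A O : Type}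

/-- A (randomized) strategy: given the initial state and the history of
(action, state) steps played so far, it chooses a distribution on actions. -/
abbrev Strategy (L A : Type) := L → List (A × L) → PMF A

/-- The sequence of states visited along a finite prefix. -/
def statesOf (l : L) (h : List (A × L)) : List L := l :: h.map Prod.snd

/-- Auxiliary probability of a finite prefix, for a strategy `π` given as a
function of the remaining history. -/
noncomputable def prefProbAux (M : POMDP L A O) :
    (List (A × L) → PMF A) → L → List (A × L) → ℝ≥0∞
  | _, _, [] => 1
  | π, l, (a, l') :: h =>
      π [] a * M.δ l a l' * M.prefProbAux (fun h' => π ((a, l') :: h')) l' h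

/-- The probability, under strategy `α` from state `l`, that the play starts
with the finite prefix `h` of (action, state) steps. -/
noncomputable def prefProb (M : POMDP L A O) (α : Strategy L A) (l : L)
    (h : List (A × L)) : ℝ≥0∞ :=
  M.prefProbAux (α l) l h

/-- A prefix is consistent with `α` from `l` if it has positive probability. -/
def Consistent (M : POMDP L A O) (α : Strategy L A) (l : L) (h : List (A × L)) : Prop :=
  0 < M.prefProb α l h

/-- The probability, under strategy `α` from state `l`, that the length-`n`
prefix of the play satisfies the predicate `P`. -/
noncomputable def horizonProb (M : POMDP L A O) [Fintype L] [Fintype A]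
    (α : Strategy L A) (l : L) (n : ℕ) (P : List (A × L) → Prop) : ℝ≥0∞ :=
  ∑ f : Fin n → A × L,
    Set.indicator {g : Fin n → A × L | P (List.ofFn g)}
      (fun g => M.prefProb α l (List.ofFn g)) f

/-- `Pr_l^α(Reach(T))`: probability that the play visits a state of `T`
(as the increasing limit of the finite-horizon reachability probabilities). -/
noncomputable def reachProb (M : POMDP L A O) [Fintype L] [Fintype A]
    (α : Strategy L A) (l : L) (T : Set L) : ℝ≥0∞ :=
  ⨆ n, M.horizonProb α l n (fun h => ∃ s ∈ statesOf l h, s ∈ T)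

/-- `Pr_l^α(Safe(T))`: probability that all states of the play lie in `T`
(as the decreasing limit of the finite-horizon safety probabilities). -/
noncomputable def safeProb (M : POMDP L A O) [Fintype L] [Fintype A]
    (α : Strategy L A) (l : L) (T : Set L) : ℝ≥0∞ :=
  ⨅ n, M.horizonProb α l n (fun h => ∀ s ∈ statesOf l h, s ∈ T)

/-- `Pr_l^α(Until(T₁,T₂))`: probability that the play visits `T₂` at some
position `k` with all positions `≤ k` in `T₁`. -/
noncomputable def untilProb (M : POMDP L A O) [Fintype L] [Fintype A]
    (α : Strategy L A) (l : L) (T₁ T₂ : Set L) : ℝ≥0∞ :=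
  ⨆ n, M.horizonProb α l n (fun h => ∃ k, ∃ hk : k < (statesOf l h).length,
      (statesOf l h).get ⟨k, hk⟩ ∈ T₂ ∧
      ∀ j, ∀ hj : j < (statesOf l h).length, j ≤ k → (statesOf l h).get ⟨j, hj⟩ ∈ T₁)

/-- `Pr_l^α(coBüchi(T))`: probability that from some point on all states of
the play lie in `T`. -/
noncomputable def coBuchiProb (M : POMDP L A O) [Fintype L] [Fintype A]
    (α : Strategy L A) (l : L) (T : Set L) : ℝ≥0∞ :=
  ⨆ k, ⨅ n, M.horizonProb α l n (fun h =>
    ∀ j, ∀ hj : j < (statesOf l h).length, k ≤ j → (statesOf l h).get ⟨j, hj⟩ ∈ T)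

/-- `Pr_l^α(Büchi(T))`: probability that the play visits `T` infinitely often. -/
noncomputable def buchiProb (M : POMDP L A O) [Fintype L] [Fintype A]
    (α : Strategy L A) (l : L) (T : Set L) : ℝ≥0∞ :=
  ⨅ k, ⨆ n, M.horizonProb α l n (fun h =>
    ∃ j, ∃ hj : j < (statesOf l h).length, k ≤ j ∧ (statesOf l h).get ⟨j, hj⟩ ∈ T)

/-- A strategy is observation-based if it plays the same distribution after any
two prefixes with the same sequences of observations and of actions. -/
def ObservationBased (M : POMDP L A O) (α : Strategy L A) : Prop :=
  ∀ l l' (h h' : List (A × L)), M.obs l = M.obs l' →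
    h.map Prod.fst = h'.map Prod.fst →
    h.map (fun p => M.obs p.2) = h'.map (fun p => M.obs p.2) →
    α l h = α l' h'

/-- A strategy is pure if it always plays a Dirac distribution. -/
def PureStrategy (α : Strategy L A) : Prop := ∀ l h, ∃ a, α l h = PMF.pure a

/-- Edge of the underlying graph of the POMDP. -/
def Edge (M : POMDP L A O) (l l' : L) : Prop := ∃ a, 0 < M.δ l a l'

/-- Reachability in the underlying graph of the POMDP. -/
def ReachableFrom (M : POMDP L A O) (l l' : L) : Prop :=
  Relation.ReflTransGen M.Edge l l'

/-- The memory state reached by a memory-update function `u` (together with the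
current state) after running through a prefix. -/
def memRun (M : POMDP L A O) {Mem : Type} (u : Mem → O → A → Mem) :
    Mem → L → List (A × L) → Mem × L
  | m, l, [] => (m, l)
  | m, l, (a, l') :: h => M.memRun u (u m (M.obs l) a) l' h

/-- The (observation-based) strategy induced by a finite-memory machine given by
memory-update function `u`, next-action function `next` and initial memory `m0`. -/
def fmStrategy (M : POMDP L A O) {Mem : Type} (u : Mem → O → A → Mem)
    (next : Mem → O → PMF A) (m0 : Mem) : Strategy L A :=
  fun l h =>
    let p := M.memRun u m0 l h
    next p.1 (M.obs p.2)

/-- The distribution choosing `x` and `y` with probability 1/2 each. -/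
noncomputable def half (x y : L) : PMF L :=
  (PMF.uniformOfFintype Bool).map (fun b => if b then x else y)

end POMDP

/-- The state space of the POMDP `P'_n`: for each `1 ≤ i ≤ n` a loop of `p_i`
states `q_1^i, …, q_{p_i}^i` where `p_i` is the `i`-th prime number (encoded as
`Sum.inl ⟨i, j⟩` with `j : Fin p_i` standing for `q_{j+1}^i`), together with the
initial state `q_0 = Sum.inr 0` and the absorbing states `Goal = Sum.inr 1` and
`Sink = Sum.inr 2`. -/
abbrev Pn'State (n : ℕ) : Type :=
  (Σ i : Fin n, Fin (Nat.nth Nat.Prime i.val)) ⊕ Fin 3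

/-- `p*_n = p_1 ⋯ p_n`, the product of the first `n` primes. -/
noncomputable def pstar (n : ℕ) : ℕ := ∏ i : Fin n, Nat.nth Nat.Prime i.val

/-- The POMDP `P'_n`, with actions `tick = true` and `# = false`. From `q_0`,
every action goes to `q_1^i` with probability `1/n` for each `i`. From `q_j^i`
with `j < p_i`, `tick` goes to `q_{j+1}^i` and `#` goes to `Sink`; from
`q_{p_i}^i`, `tick` goes to `q_1^i` and `#` goes to `Goal`. `Goal` and `Sink`
are absorbing. There is a single observation (`Unit`) containing all states. -/
noncomputable def Pn'M (n : ℕ) [NeZero n] : POMDP (Pn'State n) Bool Unit where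
  δ := fun s act =>
    match s with
    | Sum.inr k =>
        if k = 0 then
          (PMF.uniformOfFintype (Fin n)).map
            (fun i => Sum.inl ⟨i, ⟨0, (Nat.prime_nth_prime i.val).pos⟩⟩)
        else PMF.pure (Sum.inr k)
    | Sum.inl ⟨i, j⟩ =>
        if hlt : j.val + 1 < Nat.nth Nat.Prime i.val then
          if act then PMF.pure (Sum.inl ⟨i, ⟨j.val + 1, hlt⟩⟩)
          else PMF.pure (Sum.inr 2)
        else
          if act then PMF.pure (Sum.inl ⟨i, ⟨0, (Nat.prime_nth_prime i.val).pos⟩⟩)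
          else PMF.pure (Sum.inr 1)
  obs := fun _ => ()

/-!
Fix an almost-surely winning strategy with memory `Mem` and an action `b` it may play at `q₀`.
As there is a single observation, the memory after entering a loop and ticking `t` times is the
deterministic sequence `μ t = f^[t] m₁`, `f = u · () tick`, the same for every loop. If `#` may
be played at memory `μ t` (after a positive-probability run of `t` ticks), then `p_i ∣ t + 1`
for every `i`, since otherwise `Sink` is reached with positive probability; so `p* ∣ t + 1`.
Such a `t` exists, since otherwise the play ticks forever in a loop with positive probability.
By pigeonhole, `μ` is periodic from some `a` on with a period `d`, `a + d ≤ |Mem|`. If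
`|Mem| < p*` then `t ≥ p* - 1 ≥ a + d`, so `#` may also be played after `t - d` ticks, and
`p* ∣ d ≤ |Mem| < p*`, a contradiction.
-/

theorem Nat.mod_add_one_lt_of_not_dvd {p s : ℕ} (hp : 1 < p) (hs : ¬ p ∣ s + 1) :
    s % p + 1 < p := by
  by_contra hge
  have hmod : s % p + 1 = p := by have := Nat.mod_lt s (by omega : 0 < p); omega
  exact hs (Nat.dvd_of_mod_eq_zero (by rw [← Nat.mod_add_mod, hmod, Nat.mod_self]))

theorem PMF.sum_coe_eq_one {α : Type*} [Fintype α] (p : PMF α) : ∑ a, p a = 1 := by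
  simpa using p.tsum_coe

theorem PMF.apply_true_add_apply_false (p : PMF Bool) : p true + p false = 1 := by
  simpa using p.sum_coe_eq_one

theorem Function.exists_iterate_add_eq {α : Type*} [Fintype α] (f : α → α) (x : α) :
    ∃ a d, 0 < d ∧ a + d ≤ Fintype.card α ∧ ∀ t, a ≤ t → f^[t + d] x = f^[t] x := by
  obtain ⟨i, hi, j, hj, hne, heq⟩ :=
    Finset.exists_ne_map_eq_of_card_lt_of_maps_to (s := Finset.range (Fintype.card α + 1))
      (t := Finset.univ) (f := fun k => f^[k] x) (by simp) (by simp)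
  simp only [Finset.mem_range] at hi hj
  have hperiod : f^[max i j] x = f^[min i j] x := by
    rcases le_total i j with h | h <;> simp [h, heq]
  refine ⟨min i j, max i j - min i j, by omega, by omega, fun t ht => ?_⟩
  obtain ⟨k, rfl⟩ := Nat.exists_eq_add_of_le ht
  rw [show min i j + k + (max i j - min i j) = k + max i j by omega,
    Function.iterate_add_apply, hperiod, ← Function.iterate_add_apply, add_comm]

namespace POMDP

variable {L A O : Type} (M : POMDP L A O)

theorem prefProbAux_le_one :
    ∀ (π : List (A × L) → PMF A) (l : L) (h : List (A × L)), M.prefProbAux π l h ≤ 1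
  | _, _, [] => le_rfl
  | _, _, (_, l') :: h =>
      mul_le_one' (mul_le_one' (PMF.coe_le_one _ _) (PMF.coe_le_one _ _))
        (prefProbAux_le_one _ l' h)

theorem prefProbAux_append_le :
    ∀ (π : List (A × L) → PMF A) (l : L) (h₁ h₂ : List (A × L)),
      M.prefProbAux π l (h₁ ++ h₂) ≤ M.prefProbAux π l h₁
  | π, l, [], h₂ => M.prefProbAux_le_one π l h₂
  | _, _, (_, l') :: h₁, h₂ => mul_le_mul_right (prefProbAux_append_le _ l' h₁ h₂) _

theorem isChain_of_prefProbAux_pos :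
    ∀ (π : List (A × L) → PMF A) (l : L) (h : List (A × L)),
      0 < M.prefProbAux π l h → (statesOf l h).IsChain M.Edge
  | _, _, [], _ => List.isChain_singleton _
  | π, l, (a, l') :: h, hpos => by
      simp only [prefProbAux, CanonicallyOrderedAdd.mul_pos] at hpos
      exact List.IsChain.cons_cons ⟨a, hpos.1.2⟩ (isChain_of_prefProbAux_pos _ l' h hpos.2)

variable (α : Strategy L A) (l : L)

theorem prefProb_ne_top (h : List (A × L)) : M.prefProb α l h ≠ ⊤ :=
  ne_top_of_le_ne_top ENNReal.one_ne_top (M.prefProbAux_le_one _ l h)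

theorem statesOf_append_cons (h g : List (A × L)) (a : A) (s : L) :
    statesOf l (h ++ (a, s) :: g) = statesOf l h ++ statesOf s g := by
  simp [statesOf]

theorem prefProb_fmStrategy_cons {Mem : Type} (u : Mem → O → A → Mem)
    (next : Mem → O → PMF A) (m : Mem) (a : A) (l' : L) (h : List (A × L)) :
    M.prefProb (M.fmStrategy u next m) l ((a, l') :: h) =
      next m (M.obs l) a * M.δ l a l' *
        M.prefProb (M.fmStrategy u next (u m (M.obs l) a)) l' h :=
  rfl

theorem mem_of_prefProb_pos_of_closed (S : Set L)
    (hS : ∀ s ∈ S, ∀ a x, 0 < M.δ s a x → x ∈ S) (h g : List (A × L)) (a : A) {s : L}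
    (hs : s ∈ S) (hpos : 0 < M.prefProb α l (h ++ (a, s) :: g)) :
    ∀ x ∈ statesOf s g, x ∈ S := by
  have hchain := M.isChain_of_prefProbAux_pos _ l _ hpos
  rw [statesOf_append_cons] at hchain
  exact (List.isChain_split.mp hchain).2.induction _ _
    (fun x y ⟨b, hxy⟩ hx => hS x hx b y hxy) fun _ => hs

variable [Fintype L] [Fintype A]

theorem sum_prefProbAux_ofFn :
    ∀ (k : ℕ) (π : List (A × L) → PMF A) (l : L),
      ∑ f : Fin k → A × L, M.prefProbAux π l (List.ofFn f) = 1
  | 0, _, _ => by simp [prefProbAux]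
  | k + 1, π, l => by
      rw [← (Fin.consEquiv fun _ => A × L).sum_comp, Fintype.sum_prod_type]
      simp only [Fin.consEquiv_apply, List.ofFn_succ, Fin.cons_zero, Fin.cons_succ,
        prefProbAux, ← Finset.mul_sum, sum_prefProbAux_ofFn k, mul_one]
      simp only [Fintype.sum_prod_type, ← Finset.mul_sum, PMF.sum_coe_eq_one, mul_one]

theorem sum_prefProbAux_append_ofFn (k : ℕ) :
    ∀ (π : List (A × L) → PMF A) (l : L) (h : List (A × L)),
      ∑ g : Fin k → A × L, M.prefProbAux π l (h ++ List.ofFn g) = M.prefProbAux π l h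
  | π, l, [] => M.sum_prefProbAux_ofFn k π l
  | _, _, (_, l') :: h => by
      simp only [List.cons_append, prefProbAux, ← Finset.mul_sum,
        sum_prefProbAux_append_ofFn k _ l' h]

/-- The length-`k` extensions of `h` carry the mass `prefProb α l h`, none of which is counted
in the horizon probability of `P`. -/
theorem horizonProb_add_prefProb_le (P : List (A × L) → Prop) (h : List (A × L)) (k : ℕ)
    (hP : ∀ g : Fin k → A × L, 0 < M.prefProb α l (h ++ List.ofFn g) →
      ¬ P (h ++ List.ofFn g)) :
    M.horizonProb α l (h.length + k) P + M.prefProb α l h ≤ 1 := by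
  classical
  set F : (Fin (h.length + k) → A × L) → ℝ≥0∞ := fun f => M.prefProb α l (List.ofFn f)
  set ext : (Fin k → A × L) → Fin (h.length + k) → A × L := Fin.append h.get
  have ofFn_ext (g : Fin k → A × L) : List.ofFn (ext g) = h ++ List.ofFn g := by
    simp [ext, List.ofFn_fin_append]
  have ext_injective : ext.Injective := fun g g' hg => by
    simpa [ofFn_ext] using congrArg List.ofFn hg
  set E := Finset.univ.image ext
  have sum_E : ∑ f ∈ E, F f = M.prefProb α l h := by
    rw [Finset.sum_image fun g _ g' _ hg => ext_injective hg]
    simpa only [F, ofFn_ext, prefProb] using M.sum_prefProbAux_append_ofFn k (α l) l h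
  have indicator_E : ∀ f ∈ E, Set.indicator {f | P (List.ofFn f)} F f = 0 := by
    simp only [E, Finset.mem_image, Finset.mem_univ, true_and]
    rintro _ ⟨g, rfl⟩
    rw [Set.indicator_apply_eq_zero]
    intro hPg
    by_contra hne
    exact hP g (by simpa [F, ofFn_ext] using pos_iff_ne_zero.2 hne)
      (by simpa [ofFn_ext] using hPg)
  calc M.horizonProb α l (h.length + k) P + M.prefProb α l h
      = ∑ f ∈ Eᶜ, Set.indicator {f | P (List.ofFn f)} F f + ∑ f ∈ E, F f := by
        rw [horizonProb, ← Finset.sum_compl_add_sum E, Finset.sum_eq_zero indicator_E, add_zero,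
          sum_E]
    _ ≤ ∑ f ∈ Eᶜ, F f + ∑ f ∈ E, F f := by
        gcongr with f
        exact Set.indicator_le_self _ _ f
    _ = 1 := by
        rw [Finset.sum_compl_add_sum]
        exact M.sum_prefProbAux_ofFn _ (α l) l

theorem prefProb_eq_zero_of_reachProb_eq_one {T : Set L} (hreach : M.reachProb α l T = 1)
    (h : List (A × L))
    (hT : ∀ g, 0 < M.prefProb α l (h ++ g) → ∀ s ∈ statesOf l (h ++ g), s ∉ T) :
    M.prefProb α l h = 0 := by
  by_contra hne
  have hh : ∀ s ∈ statesOf l h, s ∉ T := by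
    simpa using hT [] (by simpa using pos_iff_ne_zero.2 hne)
  suffices M.reachProb α l T ≤ 1 - M.prefProb α l h by
    rw [hreach] at this
    exact this.not_gt (ENNReal.sub_lt_self ENNReal.one_ne_top one_ne_zero hne)
  refine iSup_le fun m => ENNReal.le_sub_of_add_le_right (M.prefProb_ne_top α l h) ?_
  rcases le_or_gt h.length m with hm | hm
  · obtain ⟨k, rfl⟩ := Nat.exists_eq_add_of_le hm
    exact M.horizonProb_add_prefProb_le α l _ h k fun g hg ⟨s, hs, hsT⟩ => hT _ hg s hs hsT
  · have hlen : (h.take m).length + 0 = m := by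
      simp only [List.length_take, add_zero]
      omega
    calc M.horizonProb α l m (fun g => ∃ s ∈ statesOf l g, s ∈ T) + M.prefProb α l h
        ≤ M.horizonProb α l ((h.take m).length + 0) (fun g => ∃ s ∈ statesOf l g, s ∈ T) +
            M.prefProb α l (h.take m) := by
          rw [hlen]
          gcongr
          conv_lhs => rw [← List.take_append_drop m h]
          exact M.prefProbAux_append_le _ l _ _
      _ ≤ 1 := M.horizonProb_add_prefProb_le α l _ _ 0 fun g _ ⟨s, hs, hsT⟩ => by
          simp only [List.ofFn_zero, List.append_nil, statesOf, List.mem_cons,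
            List.map_take] at hs
          exact hh s (by simpa [statesOf] using hs.imp_right List.mem_of_mem_take) hsT

theorem reachProb_le_one_sub_of_forall_avoiding {T : Set L} (c : ℝ≥0∞)
    (hc : ∀ m, ∃ h : List (A × L), h.length = m ∧ c ≤ M.prefProb α l h ∧
      ∀ s ∈ statesOf l h, s ∉ T) :
    M.reachProb α l T ≤ 1 - c := by
  refine iSup_le fun m => ?_
  obtain ⟨h, rfl, hch, hT⟩ := hc m
  calc M.horizonProb α l h.length (fun g => ∃ s ∈ statesOf l g, s ∈ T)
      ≤ 1 - M.prefProb α l h := by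
        refine ENNReal.le_sub_of_add_le_right (M.prefProb_ne_top α l h) ?_
        simpa using M.horizonProb_add_prefProb_le α l _ h 0
          fun g _ ⟨s, hs, hsT⟩ => hT s (by simpa using hs) hsT
    _ ≤ 1 - c := tsub_le_tsub_left hch 1

end POMDP

theorem two_pow_le_pstar (n : ℕ) : 2 ^ n ≤ pstar n := by
  simpa [pstar] using Finset.prod_le_prod' (s := Finset.univ) fun (i : Fin n) _ =>
    (Nat.prime_nth_prime i.val).two_le

theorem pstar_dvd_of_forall_dvd {n k : ℕ} (h : ∀ i : Fin n, Nat.nth Nat.Prime i.val ∣ k) :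
    pstar n ∣ k := by
  have nth_injective : Function.Injective fun i : Fin n => Nat.nth Nat.Prime i.val :=
    fun i j hij => Fin.ext (Nat.nth_injective Nat.infinite_setOfPred_prime hij)
  have := Finset.prod_primes_dvd k
    (s := Finset.univ.image fun i : Fin n => Nat.nth Nat.Prime i.val)
    (by simpa using fun i : Fin n => (Nat.prime_nth_prime i.val).prime) (by simpa using h)
  rwa [Finset.prod_image fun i _ j _ hij => nth_injective hij] at this

theorem card_pn'State (n : ℕ) :
    Fintype.card (Pn'State n) = 3 + ∑ i : Fin n, Nat.nth Nat.Prime i.val := by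
  simp [add_comm]

namespace Pn'M

open POMDP

variable {n : ℕ}

variable (n) in
/-- The state `q_{(s mod p_i) + 1}^i`, reached from `q_1^i` after `s` ticks. -/
noncomputable def loopState (i : Fin n) (s : ℕ) : Pn'State n :=
  Sum.inl ⟨i, ⟨s % Nat.nth Nat.Prime i.val, Nat.mod_lt s (Nat.prime_nth_prime i.val).pos⟩⟩

noncomputable def tickPath (i : Fin n) (s t : ℕ) : List (Bool × Pn'State n) :=
  (List.range t).map fun j => (true, loopState n i (s + j + 1))

theorem length_tickPath (i : Fin n) (s t : ℕ) : (tickPath i s t).length = t := by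
  simp [tickPath]

theorem tickPath_succ (i : Fin n) (s t : ℕ) :
    tickPath i s (t + 1) = (true, loopState n i (s + 1)) :: tickPath i (s + 1) t := by
  simp [tickPath, List.range_succ_eq_map, add_assoc, add_comm 1]

theorem goal_notMem_statesOf_entry (b : Bool) (i : Fin n) (t : ℕ) :
    Sum.inr 1 ∉ statesOf (Sum.inr 0) ((b, loopState n i 0) :: tickPath i 0 t) := by
  simp [statesOf, tickPath, loopState]

variable {Mem : Type} (u : Mem → Unit → Bool → Mem) (next : Mem → Unit → PMF Bool)

def tickMem (m : Mem) (t : ℕ) : Mem := (fun x => u x () true)^[t] m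

noncomputable def tickProb (m : Mem) (t : ℕ) : ℝ≥0∞ :=
  ∏ j ∈ Finset.range t, next (tickMem u m j) () true

theorem tickProb_antitone (m : Mem) : Antitone (tickProb u next m) :=
  antitone_nat_of_succ_le fun t => by
    rw [tickProb, Finset.prod_range_succ]
    exact mul_le_of_le_one_right' (PMF.coe_le_one _ _)

variable [NeZero n]

theorem δ_loopState_tick (i : Fin n) (s : ℕ) :
    (Pn'M n).δ (loopState n i s) true (loopState n i (s + 1)) = 1 := by
  have hp := (Nat.prime_nth_prime i.val).one_lt
  have hs_lt := Nat.mod_lt s (Nat.prime_nth_prime i.val).pos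
  simp only [Pn'M, loopState]
  have key := Nat.add_mod_add_ite s 1 (Nat.nth Nat.Prime i.val)
  rw [Nat.mod_eq_of_lt hp] at key
  split_ifs at key ⊢ with hlt <;> simp [Fin.ext_iff] <;> omega

theorem δ_loopState_sharp (i : Fin n) {s : ℕ} (hs : ¬ Nat.nth Nat.Prime i.val ∣ s + 1) :
    (Pn'M n).δ (loopState n i s) false (Sum.inr 2) = 1 := by
  have hlt := Nat.mod_add_one_lt_of_not_dvd (Nat.prime_nth_prime i.val).one_lt hs
  simp [Pn'M, loopState, hlt]

theorem δ_init_loopState_pos (b : Bool) (i : Fin n) :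
    0 < (Pn'M n).δ (Sum.inr 0) b (loopState n i 0) := by
  rw [pos_iff_ne_zero, ← PMF.mem_support_iff]
  simp [Pn'M, loopState]

theorem sink_closed : ∀ s ∈ ({Sum.inr 2} : Set (Pn'State n)), ∀ a x,
    0 < (Pn'M n).δ s a x → x ∈ ({Sum.inr 2} : Set (Pn'State n)) := by
  rintro _ rfl a x hx
  simpa [Pn'M] using (PMF.mem_support_iff _ _).2 hx.ne'

theorem prefProb_tickPath_append (i : Fin n) (t : ℕ) :
    ∀ (s : ℕ) (m : Mem) (e : List (Bool × Pn'State n)),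
      (Pn'M n).prefProb ((Pn'M n).fmStrategy u next m) (loopState n i s) (tickPath i s t ++ e) =
        tickProb u next m t * (Pn'M n).prefProb ((Pn'M n).fmStrategy u next (tickMem u m t))
          (loopState n i (s + t)) e := by
  induction t with
  | zero => simp [tickPath, tickProb, tickMem]
  | succ t ih =>
      intro s m e
      have tickMem_succ (j : ℕ) : tickMem u (u m () true) j = tickMem u m (j + 1) :=
        (Function.iterate_succ_apply _ j m).symm
      rw [tickPath_succ, List.cons_append, prefProb_fmStrategy_cons, ih, δ_loopState_tick,
        tickProb, tickProb, Finset.prod_range_succ', tickMem_succ, add_assoc, add_comm 1 t]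
      simp only [show (Pn'M n).obs (loopState n i s) = () from rfl, tickMem_succ, mul_one]
      rw [show tickMem u m 0 = m from rfl]
      ring

theorem prefProb_entry_tickPath_append (m0 : Mem) (b : Bool) (i : Fin n) (t : ℕ)
    (e : List (Bool × Pn'State n)) :
    (Pn'M n).prefProb ((Pn'M n).fmStrategy u next m0) (Sum.inr 0)
        ((b, loopState n i 0) :: (tickPath i 0 t ++ e)) =
      next m0 () b * (Pn'M n).δ (Sum.inr 0) b (loopState n i 0) *
        (tickProb u next (u m0 () b) t *
          (Pn'M n).prefProb ((Pn'M n).fmStrategy u next (tickMem u (u m0 () b) t))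
            (loopState n i t) e) := by
  rw [prefProb_fmStrategy_cons, prefProb_tickPath_append, zero_add]

variable {u next} {m0 : Mem} {b : Bool}

/-- Otherwise, in a loop `i` with `p_i ∤ t + 1`, the `#` leads to `Sink` with positive
probability. -/
theorem pstar_dvd_of_sharp_pos
    (hreach : (Pn'M n).reachProb ((Pn'M n).fmStrategy u next m0) (Sum.inr 0) {Sum.inr 1} = 1)
    (hb : next m0 () b ≠ 0) {t : ℕ} (ht : tickProb u next (u m0 () b) t ≠ 0)
    (hsharp : next (tickMem u (u m0 () b) t) () false ≠ 0) :
    pstar n ∣ t + 1 := by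
  refine pstar_dvd_of_forall_dvd fun i => ?_
  by_contra hnd
  set entry := (b, loopState n i 0) :: tickPath i 0 t
  have hzero : (Pn'M n).prefProb ((Pn'M n).fmStrategy u next m0) (Sum.inr 0)
      (entry ++ [(false, Sum.inr 2)]) = 0 := by
    refine prefProb_eq_zero_of_reachProb_eq_one _ _ _ hreach _ fun g hg s hs => ?_
    rw [List.append_assoc, List.singleton_append] at hg hs
    rw [statesOf_append_cons, List.mem_append] at hs
    rcases hs with hs | hs
    · exact fun hgoal => goal_notMem_statesOf_entry b i t (hgoal ▸ hs)
    · rw [mem_of_prefProb_pos_of_closed _ _ _ _ sink_closed entry g false rfl hg s hs]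
      simp
  apply hzero.not_gt
  rw [List.cons_append, prefProb_entry_tickPath_append, prefProb_fmStrategy_cons,
    δ_loopState_sharp i hnd]
  simp [pos_iff_ne_zero, hb, ht, hsharp, (δ_init_loopState_pos b i).ne', prefProb, prefProbAux]

/-- Otherwise the play ticks forever in a loop with positive probability. -/
theorem exists_sharp_pos
    (hreach : (Pn'M n).reachProb ((Pn'M n).fmStrategy u next m0) (Sum.inr 0) {Sum.inr 1} = 1)
    (hb : next m0 () b ≠ 0) :
    ∃ t, tickProb u next (u m0 () b) t ≠ 0 ∧
      next (tickMem u (u m0 () b) t) () false ≠ 0 := by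
  by_contra! hno
  have tickProb_eq_one (t : ℕ) : tickProb u next (u m0 () b) t = 1 := by
    induction t with
    | zero => simp [tickProb]
    | succ t ih =>
        rw [tickProb, Finset.prod_range_succ, ← tickProb, ih, one_mul]
        simpa [hno t (by simp [ih])] using
          (next (tickMem u (u m0 () b) t) ()).apply_true_add_apply_false
  set i : Fin n := ⟨0, Nat.pos_of_neZero n⟩
  set c := next m0 () b * (Pn'M n).δ (Sum.inr 0) b (loopState n i 0)
  have hc : c ≠ 0 := mul_ne_zero hb (δ_init_loopState_pos b i).ne'
  have hle := reachProb_le_one_sub_of_forall_avoiding (Pn'M n)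
    ((Pn'M n).fmStrategy u next m0) (Sum.inr 0) (T := {Sum.inr 1}) c fun m => by
      rcases m with _ | t
      · refine ⟨[], rfl, ?_, by simp [statesOf]⟩
        exact mul_le_one' (PMF.coe_le_one _ _) (PMF.coe_le_one _ _)
      · refine ⟨(b, loopState n i 0) :: tickPath i 0 t, by simp [length_tickPath], ?_,
          fun s hs hgoal => goal_notMem_statesOf_entry b i t (hgoal ▸ hs)⟩
        rw [← List.append_nil (tickPath i 0 t), prefProb_entry_tickPath_append, tickProb_eq_one]
        simp [c, prefProb, prefProbAux]
  rw [hreach] at hle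
  exact hle.not_gt (ENNReal.sub_lt_self ENNReal.one_ne_top one_ne_zero hc)

theorem pstar_le_card_of_reachProb_eq_one [Fintype Mem]
    (hreach : (Pn'M n).reachProb ((Pn'M n).fmStrategy u next m0) (Sum.inr 0) {Sum.inr 1} = 1) :
    pstar n ≤ Fintype.card Mem := by
  obtain ⟨b, hb⟩ := (next m0 ()).support_nonempty
  rw [PMF.mem_support_iff] at hb
  obtain ⟨t, ht, hsharp⟩ := exists_sharp_pos hreach hb
  have hdvd_t := pstar_dvd_of_sharp_pos hreach hb ht hsharp
  by_contra! hcard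
  obtain ⟨a, d, hd, had, hperiod⟩ :=
    Function.exists_iterate_add_eq (fun x => u x () true) (u m0 () b)
  have ht_ge : a + d ≤ t := by have := Nat.le_of_dvd t.succ_pos hdvd_t; omega
  have hmem : tickMem u (u m0 () b) (t - d) = tickMem u (u m0 () b) t := by
    rw [tickMem, tickMem, ← hperiod (t - d) (by omega), Nat.sub_add_cancel (by omega)]
  have hdvd_s := pstar_dvd_of_sharp_pos hreach hb
    ((pos_iff_ne_zero.2 ht).trans_le (tickProb_antitone u next _ (Nat.sub_le t d))).ne'
    (hmem ▸ hsharp)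
  have hdvd_d : pstar n ∣ d := by
    simpa [show t + 1 - (t - d + 1) = d by omega] using Nat.dvd_sub hdvd_t hdvd_s
  exact absurd (Nat.le_of_dvd hd hdvd_d) (by omega)

end Pn'M

/-- For every `n ≥ 1`, in the POMDP `P'_n` with the reachability
objective `Reach({Goal})`, every finite-memory randomized (observation-based)
strategy that is almost-sure winning from `q_0` has memory of size at least
`p*_n = p_1 ⋯ p_n`; in particular `p*_n ≥ 2^n`, while `P'_n` has
`3 + (p_1 + ⋯ + p_n)` states. -/
theorem pn'_almost_sure_reach_memory_lower_bound (n : ℕ) [NeZero n] :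
    (∀ (Mem : Type) (iM : Fintype Mem) (m0 : Mem)
        (u : Mem → Unit → Bool → Mem)
        (next : Mem → Unit → PMF Bool),
        (Pn'M n).reachProb ((Pn'M n).fmStrategy u next m0)
            (Sum.inr 0) {(Sum.inr 1 : Pn'State n)} = 1 →
        pstar n ≤ @Fintype.card Mem iM) ∧
    2 ^ n ≤ pstar n ∧
    Fintype.card (Pn'State n) = 3 + ∑ i : Fin n, Nat.nth Nat.Prime i.val :=
  ⟨fun _ _ _ _ _ hreach => Pn'M.pstar_le_card_of_reachProb_eq_one hreach, two_pow_le_pstar n,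
    card_pn'State n⟩
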